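/- arXiv:2605.01354 — 3 statements merged into one kernel-verified Lean document; each statement's English description precedes it below -/
import Mathlib

section
/- Let x, y, z be nonzero vectors in ℝ², let θ = arccos(⟨x,y⟩/(|x||y|)) and θ' = arccos(⟨z,y⟩/(|z||y|)). If θ + θ' ≥ π, then |x − y| + |y − z| ≥ |x| + |z|. -/
/-!
Projecting `x - y` onto the direction of `x` gives `‖x - y‖ ≥ ‖x‖ - cos θ ‖y‖`, and likewise
`‖y - z‖ ≥ ‖z‖ - cos θ' ‖y‖`. Since `θ, θ' ∈ [0, π]` and `θ + θ' ≥ π`, we have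
`cos θ ≤ cos (π - θ') = -cos θ'`, so the two error terms add up to a nonnegative multiple of `‖y‖`.
-/

open Real InnerProductGeometry

theorem Real.cos_add_cos_nonpos_of_pi_le_add {a b : ℝ} (ha : a ≤ π) (hb : b ≤ π)
    (hab : π ≤ a + b) : cos a + cos b ≤ 0 := by
  have h : cos a ≤ cos (π - b) :=
    cos_le_cos_of_nonneg_of_le_pi (by linarith) ha (by linarith)
  rw [cos_pi_sub] at h
  linarith

section InnerProductSpace

variable {V : Type*} [NormedAddCommGroup V] [InnerProductSpace ℝ V]

theorem InnerProductGeometry.norm_sub_cos_angle_mul_norm_le_norm_sub (x y : V) :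
    ‖x‖ - cos (angle x y) * ‖y‖ ≤ ‖x - y‖ := by
  rcases eq_or_ne x 0 with rfl | hx
  · simp [angle_zero_left]
  have hproj : ‖x‖ * (‖x‖ - cos (angle x y) * ‖y‖) ≤ ‖x‖ * ‖x - y‖ := by
    have hcs := real_inner_le_norm x (x - y)
    rw [inner_sub_right, real_inner_self_eq_norm_sq, ← cos_angle_mul_norm_mul_norm] at hcs
    linarith
  exact le_of_mul_le_mul_left hproj (norm_pos_iff.mpr hx)

theorem InnerProductGeometry.norm_add_norm_le_of_pi_le_angle_add_angle {x y z : V}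
    (h : π ≤ angle x y + angle z y) : ‖x‖ + ‖z‖ ≤ ‖x - y‖ + ‖y - z‖ := by
  have hx := norm_sub_cos_angle_mul_norm_le_norm_sub x y
  have hz := norm_sub_cos_angle_mul_norm_le_norm_sub z y
  have hcos := cos_add_cos_nonpos_of_pi_le_add (angle_le_pi x y) (angle_le_pi z y) h
  have herr := mul_nonpos_of_nonpos_of_nonneg hcos (norm_nonneg y)
  rw [norm_sub_rev y z]
  linarith

end InnerProductSpace

theorem stmt_0_general (x y z : EuclideanSpace ℝ (Fin 2))
    (h : Real.arccos ((inner ℝ x y : ℝ) / (‖x‖ * ‖y‖))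
        + Real.arccos ((inner ℝ z y : ℝ) / (‖z‖ * ‖y‖)) ≥ π) :
    ‖x - y‖ + ‖y - z‖ ≥ ‖x‖ + ‖z‖ :=
  norm_add_norm_le_of_pi_le_angle_add_angle h

theorem stmt_0 (x y z : EuclideanSpace ℝ (Fin 2))
    (hx : x ≠ 0) (hy : y ≠ 0) (hz : z ≠ 0)
    (h : Real.arccos ((inner ℝ x y : ℝ) / (‖x‖ * ‖y‖))
        + Real.arccos ((inner ℝ z y : ℝ) / (‖z‖ * ‖y‖)) ≥ π) :
    ‖x - y‖ + ‖y - z‖ ≥ ‖x‖ + ‖z‖ :=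
  stmt_0_general x y z h
end

section
/- Let θ be a pseudometric on a set S with values in [0,π]. Define D((r,s),(r',s')) = sqrt(r² + r'² − 2rr' cos θ(s,s')) on [0,∞) × S (where the r-coordinates are the radii). Then D is a pseudometric on [0,∞) × S. -/
open Real

/-- The cone distance over a `[0, π]`-valued pseudometric `θ` on `S`:
`D((r,s),(r',s')) = sqrt(r² + r'² − 2 r r' cos θ(s,s'))`. -/
noncomputable def coneD {S : Type*} (θ : S → S → ℝ) (u v : ℝ × S) : ℝ :=
  Real.sqrt (u.1 ^ 2 + v.1 ^ 2 - 2 * u.1 * v.1 * Real.cos (θ u.2 v.2))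

private lemma cone_dist_eq (r₁ r₂ a b : ℝ) :
    Real.sqrt (r₁ ^ 2 + r₂ ^ 2 - 2 * r₁ * r₂ * Real.cos (a - b)) =
      dist (⟨r₁ * Real.cos a, r₁ * Real.sin a⟩ : ℂ)
        (⟨r₂ * Real.cos b, r₂ * Real.sin b⟩ : ℂ) := by
  rw [Complex.dist_eq, Complex.norm_def, Complex.normSq_apply]
  congr 1
  simp only [Complex.sub_re, Complex.sub_im]
  rw [Real.cos_sub]
  have h1 := Real.sin_sq_add_cos_sq a
  have h2 := Real.sin_sq_add_cos_sq b
  nlinarith [h1, h2]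

theorem stmt_12 {S : Type*} (θ : S → S → ℝ)
    (hrange : ∀ s t, θ s t ∈ Set.Icc (0 : ℝ) π)
    (hrefl : ∀ s, θ s s = 0)
    (hsymm : ∀ s t, θ s t = θ t s)
    (htri : ∀ s t u, θ s u ≤ θ s t + θ t u) :
    (∀ u v : ℝ × S, 0 ≤ u.1 → 0 ≤ v.1 → 0 ≤ coneD θ u v) ∧
    (∀ u : ℝ × S, 0 ≤ u.1 → coneD θ u u = 0) ∧
    (∀ u v : ℝ × S, 0 ≤ u.1 → 0 ≤ v.1 → coneD θ u v = coneD θ v u) ∧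
    (∀ u v w : ℝ × S, 0 ≤ u.1 → 0 ≤ v.1 → 0 ≤ w.1 →
      coneD θ u w ≤ coneD θ u v + coneD θ v w) := by
  refine ⟨fun u v _ _ => Real.sqrt_nonneg _, ?_, ?_, ?_⟩
  · intro u _
    have h : u.1 ^ 2 + u.1 ^ 2 - 2 * u.1 * u.1 * Real.cos (θ u.2 u.2) = 0 := by
      rw [hrefl u.2, Real.cos_zero]; ring
    simp [coneD, h]
  · intro u v _ _
    unfold coneD
    rw [hsymm u.2 v.2]
    ring_nf
  · intro u v w hu hv hw
    set α := θ u.2 v.2 with hα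
    set β := θ v.2 w.2 with hβ
    set γ := min (α + β) π with hγ
    obtain ⟨hα0, hαπ⟩ := hrange u.2 v.2
    obtain ⟨hβ0, hβπ⟩ := hrange v.2 w.2
    obtain ⟨hθ0, hθπ⟩ := hrange u.2 w.2
    have hβγ : β ≤ γ := le_min (by linarith) hβπ
    have hγπ : γ ≤ π := min_le_right _ _
    have hθγ : θ u.2 w.2 ≤ γ := le_min (htri u.2 v.2 w.2) hθπ
    have hγβα : γ - β ≤ α := by
      have := min_le_left (α + β) π
      linarith
    -- cosine comparisons
    have hc1 : Real.cos α ≤ Real.cos (γ - β) :=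
      Real.cos_le_cos_of_nonneg_of_le_pi (by linarith) hαπ hγβα
    have hc2 : Real.cos γ ≤ Real.cos (θ u.2 w.2) :=
      Real.cos_le_cos_of_nonneg_of_le_pi hθ0 hγπ hθγ
    -- the three planar points
    set U : ℂ := ⟨u.1 * Real.cos (γ - β), u.1 * Real.sin (γ - β)⟩ with hU
    set V : ℂ := ⟨v.1 * Real.cos 0, v.1 * Real.sin 0⟩ with hV
    set W : ℂ := ⟨w.1 * Real.cos (-β), w.1 * Real.sin (-β)⟩ with hW
    have e1 : Real.sqrt (u.1 ^ 2 + v.1 ^ 2 - 2 * u.1 * v.1 * Real.cos (γ - β))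
        = dist U V := by
      have := cone_dist_eq u.1 v.1 (γ - β) 0
      rwa [sub_zero] at this
    have e2 : Real.sqrt (v.1 ^ 2 + w.1 ^ 2 - 2 * v.1 * w.1 * Real.cos β)
        = dist V W := by
      have := cone_dist_eq v.1 w.1 0 (-β)
      rwa [zero_sub, neg_neg] at this
    have e3 : Real.sqrt (u.1 ^ 2 + w.1 ^ 2 - 2 * u.1 * w.1 * Real.cos γ)
        = dist U W := by
      have := cone_dist_eq u.1 w.1 (γ - β) (-β)
      have hg : (γ - β) - (-β) = γ := by ring
      rwa [hg] at this
    have step1 : coneD θ u w ≤ dist U W := by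
      rw [← e3]
      apply Real.sqrt_le_sqrt
      nlinarith [mul_nonneg hu hw]
    have step2 : dist U V ≤ coneD θ u v := by
      rw [← e1]
      apply Real.sqrt_le_sqrt
      nlinarith [mul_nonneg hu hv]
    have step3 : dist V W = coneD θ v w := e2.symm
    calc coneD θ u w ≤ dist U W := step1
      _ ≤ dist U V + dist V W := dist_triangle U V W
      _ ≤ coneD θ u v + coneD θ v w := by rw [step3]; exact add_le_add_left step2 _
end

section
/- In a real Hilbert space H, let A be a maximal monotone operator with resolvents J_λ = (I + λA)^{-1}. For all λ, μ > 0 and x, y ∈ H: (λ+μ)‖J_λx − J_μy‖² ≤ λ‖J_λx − y‖² + μ‖J_μy − x‖² − μ‖J_λx − x‖² − λ‖J_μy − y‖². In particular (setting y = J_λx), (1/μ)‖J_μJ_λx − J_λx‖ ≤ (1/λ)‖J_λx − x‖. -/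
/-!
Write `u = J_λ x`, `v = J_μ y`. Monotonicity of `A` at the pairs `(u, λ⁻¹(x - u))` and
`(v, μ⁻¹(y - v))`, scaled by `λμ`, gives `0 ≤ ⟪u - v, μ(x - u) - λ(y - v)⟫`. Expanding the
squares, the right-hand side of the inequality minus its left-hand side is exactly twice this
inner product. For the second claim take `y = u` in this inner-product inequality:
then `λ‖u - v‖² ≤ μ⟪u - v, x - u⟫ ≤ μ‖u - v‖‖x - u‖`.
-/

open RealInnerProductSpace

section

variable {H : Type*} [NormedAddCommGroup H] [InnerProductSpace ℝ H]

theorem inner_sub_smul_sub_nonneg_of_monotone {A : H → Set H}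
    (hmono : ∀ x y x' y' : H, x' ∈ A x → y' ∈ A y → 0 ≤ ⟪x - y, x' - y'⟫)
    {lam mu : ℝ} (hlam : 0 < lam) (hmu : 0 < mu) {x y u v : H}
    (hu : lam⁻¹ • (x - u) ∈ A u) (hv : mu⁻¹ • (y - v) ∈ A v) :
    0 ≤ ⟪u - v, mu • (x - u) - lam • (y - v)⟫ := by
  have h := mul_nonneg (mul_pos hlam hmu).le (hmono u v _ _ hu hv)
  have hl : lam * mu * lam⁻¹ = mu := by field_simp
  have hm : lam * mu * mu⁻¹ = lam := by field_simp
  rwa [← real_inner_smul_right, smul_sub, smul_smul, smul_smul, hl, hm] at h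

theorem weighted_norm_sq_identity (lam mu : ℝ) (x y u v : H) :
    lam * ‖u - y‖ ^ 2 + mu * ‖v - x‖ ^ 2 - mu * ‖u - x‖ ^ 2 - lam * ‖v - y‖ ^ 2
      - (lam + mu) * ‖u - v‖ ^ 2 = 2 * ⟪u - v, mu • (x - u) - lam • (y - v)⟫ := by
  have hy : u - y = (u - v) - (y - v) := by abel
  have hx : v - x = -((u - v) + (x - u)) := by abel
  rw [inner_sub_right (u - v) (mu • _), real_inner_smul_right, real_inner_smul_right, hy, hx,
    norm_neg, norm_sub_sq_real, norm_add_sq_real, norm_sub_rev u x, norm_sub_rev v y]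
  ring

theorem div_le_div_of_mul_sq_le {lam mu t s : ℝ} (hlam : 0 < lam) (hmu : 0 < mu)
    (ht : 0 ≤ t) (hs : 0 ≤ s) (h : lam * t ^ 2 ≤ mu * (t * s)) : 1 / mu * t ≤ 1 / lam * s := by
  rcases ht.eq_or_lt with rfl | ht
  · simp only [mul_zero]
    positivity
  · rw [one_div_mul_eq_div, one_div_mul_eq_div, div_le_div_iff₀ hmu hlam]
    nlinarith

end

theorem stmt_18_general {H : Type*} [NormedAddCommGroup H] [InnerProductSpace ℝ H]
    (A : H → Set H)
    (hmono : ∀ x y x' y' : H, x' ∈ A x → y' ∈ A y →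
      0 ≤ (inner ℝ (x - y) (x' - y') : ℝ))
    (J : ℝ → H → H)
    (hJ : ∀ lam : ℝ, 0 < lam → ∀ x : H, lam⁻¹ • (x - J lam x) ∈ A (J lam x)) :
    ∀ lam mu : ℝ, 0 < lam → 0 < mu → ∀ x y : H,
      ((lam + mu) * ‖J lam x - J mu y‖ ^ 2
        ≤ lam * ‖J lam x - y‖ ^ 2 + mu * ‖J mu y - x‖ ^ 2
          - mu * ‖J lam x - x‖ ^ 2 - lam * ‖J mu y - y‖ ^ 2) ∧
      (1 / mu * ‖J mu (J lam x) - J lam x‖ ≤ 1 / lam * ‖J lam x - x‖) := by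
  intro lam mu hlam hmu x y
  constructor
  · have h :=
      inner_sub_smul_sub_nonneg_of_monotone hmono hlam hmu (hJ lam hlam x) (hJ mu hmu y)
    linarith [weighted_norm_sq_identity lam mu x y (J lam x) (J mu y)]
  · set u := J lam x
    set w := J mu u
    have h := inner_sub_smul_sub_nonneg_of_monotone hmono hlam hmu (hJ lam hlam x) (hJ mu hmu u)
    rw [inner_sub_right, real_inner_smul_right, real_inner_smul_right,
      real_inner_self_eq_norm_sq] at h
    have hcs : ⟪u - w, x - u⟫ ≤ ‖u - w‖ * ‖x - u‖ := real_inner_le_norm _ _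
    rw [norm_sub_rev w u, norm_sub_rev u x]
    refine div_le_div_of_mul_sq_le hlam hmu (norm_nonneg _) (norm_nonneg _) ?_
    linarith [mul_le_mul_of_nonneg_left hcs hmu.le]

theorem stmt_18 {H : Type*} [NormedAddCommGroup H] [InnerProductSpace ℝ H]
    [CompleteSpace H] (A : H → Set H)
    (hmono : ∀ x y x' y' : H, x' ∈ A x → y' ∈ A y →
      0 ≤ (inner ℝ (x - y) (x' - y') : ℝ))
    (J : ℝ → H → H)
    (hJ : ∀ lam : ℝ, 0 < lam → ∀ x : H, lam⁻¹ • (x - J lam x) ∈ A (J lam x)) :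
    ∀ lam mu : ℝ, 0 < lam → 0 < mu → ∀ x y : H,
      ((lam + mu) * ‖J lam x - J mu y‖ ^ 2
        ≤ lam * ‖J lam x - y‖ ^ 2 + mu * ‖J mu y - x‖ ^ 2
          - mu * ‖J lam x - x‖ ^ 2 - lam * ‖J mu y - y‖ ^ 2) ∧
      (1 / mu * ‖J mu (J lam x) - J lam x‖ ≤ 1 / lam * ‖J lam x - x‖) :=
  stmt_18_general A hmono J hJ
end
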